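/- Suppose |V| = |R × S| and the linear map K_1 : ℂ^V → ℂ^{R×S} is invertible, and set C_p = min_{‖η‖_{ℓ^p} = 1} ‖K_1 η‖_{ℓ^p}. If η ∈ ℂ^V satisfies 0 < ‖η‖_{ℓ^p} < (1/μ_p) · C_p/(C_p + ν_p), then Σ_{j=1}^∞ K_j(η, …, η) ≠ 0. -/

import Mathlib

open scoped ENNReal

/-- The ℓ^p norm of a finitely indexed family, `p ∈ [1, ∞]`. -/
noncomputable def lpNorm (p : ℝ≥0∞) {ι E : Type*} [Fintype ι] [SeminormedAddCommGroup E]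
    (f : ι → E) : ℝ :=
  if p = ∞ then ⨆ i, ‖f i‖ else (∑ i, ‖f i‖ ^ p.toReal) ^ (1 / p.toReal)

variable {V R S : Type*} [Fintype V] [DecidableEq V] [Fintype R] [Fintype S]

/-- The multilinear forward Born operator: `bornK α0 B G C j` is `K_j`, mapping
`(η_1, …, η_j)` (given as the first `j` values of an `ℕ`-indexed family) to
`(r, s) ↦ (−α0)^j (B D_{η_1} G D_{η_2} G ⋯ G D_{η_j} C)(r, s)`; `K_0 := 0` is junk. -/
noncomputable def bornK (α0 : ℝ) (B : Matrix R V ℂ) (G : Matrix V V ℂ) (C : Matrix V S ℂ) :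
    ℕ → (ℕ → V → ℂ) → R × S → ℂ
  | 0, _ => 0
  | j + 1, η => fun rs =>
      (-(α0 : ℂ)) ^ (j + 1) *
        (B * Matrix.diagonal (η 0) *
          (List.ofFn fun i : Fin j => G * Matrix.diagonal (η (i.1 + 1))).prod * C) rs.1 rs.2

/-- `μ_p = α0 · max_{v ∈ V} ‖row v of G‖_{ℓ^q}` (this depends only on `q`). -/
noncomputable def muConst (α0 : ℝ) (q : ℝ≥0∞) (G : Matrix V V ℂ) : ℝ :=
  α0 * ⨆ v : V, lpNorm q (G v)

/-- `ν_p = α0 · (Σ_{r ∈ R} ‖row r of B‖_q^p)^{1/p} · (Σ_{s ∈ S} ‖column s of C‖_q^p)^{1/p}`,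
with maxima replacing sums when `p = ∞`. -/
noncomputable def nuConst (α0 : ℝ) (p q : ℝ≥0∞) (B : Matrix R V ℂ) (C : Matrix V S ℂ) : ℝ :=
  α0 * lpNorm p (fun r : R => lpNorm q (B r)) * lpNorm p (fun s : S => lpNorm q fun v => C v s)

/-- `C_p = min_{‖η‖_p = 1} ‖K_1 η‖_p`. -/
noncomputable def CpConst (p : ℝ≥0∞) (α0 : ℝ) (B : Matrix R V ℂ) (G : Matrix V V ℂ)
    (C : Matrix V S ℂ) : ℝ :=
  sInf {t : ℝ | ∃ η : V → ℂ, lpNorm p η = 1 ∧ t = lpNorm p (bornK α0 B G C 1 fun _ => η)}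


/-!
Hölder's inequality, applied once per factor `G D_η`, bounds the Born terms geometrically:
`‖K_{j+1}(η, …, η)‖_p ≤ ν_p (μ_p ‖η‖_p)^j ‖η‖_p`. By homogeneity of `K_1` the first term is
large, `‖K_1 η‖_p ≥ C_p ‖η‖_p`. With `r = μ_p ‖η‖_p < C_p / (C_p + ν_p) ≤ 1` the tail is at most
`ν_p ‖η‖_p r / (1 - r) < C_p ‖η‖_p`, so it cannot cancel the first term.
-/

section lpNorm

variable {ι κ E F : Type*} [Fintype ι] [Fintype κ]
  [SeminormedAddCommGroup E] [SeminormedAddCommGroup F]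

theorem norm_le_iSup_norm (f : ι → E) (i : ι) : ‖f i‖ ≤ ⨆ j, ‖f j‖ :=
  le_ciSup (f := fun j => ‖f j‖) (Set.finite_range _).bddAbove i

theorem lpNorm_nonneg (p : ℝ≥0∞) (f : ι → E) : 0 ≤ lpNorm p f := by
  unfold lpNorm
  split
  · exact Real.iSup_nonneg fun i => norm_nonneg _
  · positivity

theorem lpNorm_le_lpNorm (p : ℝ≥0∞) {f : ι → E} {g : ι → F} (h : ∀ i, ‖f i‖ ≤ ‖g i‖) :
    lpNorm p f ≤ lpNorm p g := by
  unfold lpNorm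
  split
  · exact Real.iSup_le (fun i => (h i).trans (norm_le_iSup_norm g i))
      (Real.iSup_nonneg fun i => norm_nonneg _)
  · gcongr with i
    exact h i

theorem lpNorm_norm (p : ℝ≥0∞) (f : ι → E) : lpNorm p (fun i => ‖f i‖) = lpNorm p f := by
  simp only [lpNorm, norm_norm]

theorem lpNorm_eq_norm_toLp (p : ℝ≥0∞) [Fact (1 ≤ p)] (f : ι → E) :
    lpNorm p f = ‖WithLp.toLp p f‖ := by
  unfold lpNorm
  split
  · subst p
    rw [PiLp.norm_eq_ciSup]
  · rw [PiLp.norm_eq_sum (ENNReal.toReal_pos (zero_lt_one.trans_le Fact.out).ne' ‹_›)]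

theorem norm_le_lpNorm (p : ℝ≥0∞) [Fact (1 ≤ p)] (f : ι → E) (i : ι) : ‖f i‖ ≤ lpNorm p f := by
  rw [lpNorm_eq_norm_toLp]
  exact PiLp.norm_apply_le (WithLp.toLp p f) i

theorem lpNorm_smul (p : ℝ≥0∞) [Fact (1 ≤ p)] {𝕜 : Type*} [NormedField 𝕜] [NormedSpace 𝕜 E]
    (c : 𝕜) (f : ι → E) : lpNorm p (c • f) = ‖c‖ * lpNorm p f := by
  simp only [lpNorm_eq_norm_toLp, WithLp.toLp_smul, norm_smul]

theorem lpNorm_le_mul_lpNorm (p : ℝ≥0∞) [Fact (1 ≤ p)] {f : ι → E} {g : ι → F} {c : ℝ}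
    (hc : 0 ≤ c) (h : ∀ i, ‖f i‖ ≤ c * ‖g i‖) : lpNorm p f ≤ c * lpNorm p g :=
  calc lpNorm p f ≤ lpNorm p (c • fun i => ‖g i‖) :=
        lpNorm_le_lpNorm p fun i => by simpa [abs_of_nonneg hc] using h i
    _ = c * lpNorm p g := by rw [lpNorm_smul, Real.norm_of_nonneg hc, lpNorm_norm]

theorem lpNorm_mul_le {𝕜 : Type*} [SeminormedRing 𝕜] (p : ℝ≥0∞) (a : ι → 𝕜) (b : κ → 𝕜) :
    lpNorm p (fun x : ι × κ => a x.1 * b x.2) ≤ lpNorm p a * lpNorm p b := by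
  unfold lpNorm
  split
  · have ha : 0 ≤ ⨆ i, ‖a i‖ := Real.iSup_nonneg fun i => norm_nonneg _
    have hb : 0 ≤ ⨆ k, ‖b k‖ := Real.iSup_nonneg fun k => norm_nonneg _
    refine Real.iSup_le (fun x => (norm_mul_le _ _).trans ?_) (mul_nonneg ha hb)
    exact mul_le_mul (norm_le_iSup_norm a x.1) (norm_le_iSup_norm b x.2) (norm_nonneg _) ha
  · rw [← Real.mul_rpow (by positivity) (by positivity), Finset.sum_mul_sum,
      ← Fintype.sum_prod_type']
    gcongr with x
    rw [← Real.mul_rpow (norm_nonneg _) (norm_nonneg _)]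
    gcongr
    exact norm_mul_le _ _

theorem sum_mul_le_lpNorm_top_mul_lpNorm_one {f g : ι → ℝ} (hf : ∀ i, 0 ≤ f i)
    (hg : ∀ i, 0 ≤ g i) : ∑ i, f i * g i ≤ lpNorm ∞ f * lpNorm 1 g := by
  simp only [lpNorm, if_pos, ENNReal.one_ne_top, if_false, ENNReal.toReal_one, Real.rpow_one,
    div_one, Real.norm_of_nonneg (hf _), Real.norm_of_nonneg (hg _), Finset.mul_sum]
  gcongr with i
  · exact hg i
  · simpa only [Real.norm_of_nonneg (hf _)] using norm_le_iSup_norm f i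

theorem sum_mul_le_lpNorm_mul_lpNorm (p q : ℝ≥0∞) [p.HolderConjugate q] {f g : ι → ℝ}
    (hf : ∀ i, 0 ≤ f i) (hg : ∀ i, 0 ≤ g i) : ∑ i, f i * g i ≤ lpNorm p f * lpNorm q g := by
  by_cases hp : p = ∞
  · obtain rfl := hp
    obtain rfl := (ENNReal.HolderConjugate.eq_top_iff_eq_one ∞ q).mp rfl
    exact sum_mul_le_lpNorm_top_mul_lpNorm_one hf hg
  by_cases hq : q = ∞
  · obtain rfl := hq
    obtain rfl := (ENNReal.HolderConjugate.eq_top_iff_eq_one ∞ p).mp rfl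
    simpa only [mul_comm] using sum_mul_le_lpNorm_top_mul_lpNorm_one hg hf
  simp only [lpNorm, if_neg hp, if_neg hq, Real.norm_of_nonneg (hf _), Real.norm_of_nonneg (hg _)]
  exact Real.inner_le_Lp_mul_Lq_of_nonneg Finset.univ
    (ENNReal.HolderConjugate.toReal_of_ne_top hp hq) (fun i _ => hf i) (fun i _ => hg i)

theorem norm_sum_mul_le {𝕜 : Type*} [SeminormedRing 𝕜] (p q : ℝ≥0∞) [p.HolderConjugate q]
    (x y : ι → 𝕜) : ‖∑ i, x i * y i‖ ≤ lpNorm p x * lpNorm q y :=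
  calc ‖∑ i, x i * y i‖ ≤ ∑ i, ‖x i‖ * ‖y i‖ :=
        (norm_sum_le _ _).trans (Finset.sum_le_sum fun i _ => norm_mul_le _ _)
    _ ≤ lpNorm p (fun i => ‖x i‖) * lpNorm q (fun i => ‖y i‖) :=
        sum_mul_le_lpNorm_mul_lpNorm p q (fun i => norm_nonneg _) (fun i => norm_nonneg _)
    _ = lpNorm p x * lpNorm q y := by rw [lpNorm_norm, lpNorm_norm]

end lpNorm

theorem tsum_ne_zero_of_norm_succ_le_geometric {E : Type*} [NormedAddCommGroup E]
    [CompleteSpace E] {g : ℕ → E} {a r : ℝ} (hr₀ : 0 ≤ r) (hr₁ : r < 1)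
    (hg : ∀ j, ‖g (j + 1)‖ ≤ a * r ^ j) (hlt : a / (1 - r) < ‖g 0‖) : ∑' j, g j ≠ 0 := by
  have hgeom : HasSum (fun j => a * r ^ j) (a / (1 - r)) := by
    simpa only [div_eq_mul_inv] using (hasSum_geometric_of_lt_one hr₀ hr₁).mul_left a
  have htail : Summable fun j => g (j + 1) := hgeom.summable.of_norm_bounded hg
  rw [((summable_nat_add_iff 1).mp htail).tsum_eq_zero_add]
  intro hsum
  have : ‖g 0‖ ≤ a / (1 - r) := by
    rw [eq_neg_of_add_eq_zero_left hsum, norm_neg]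
    exact tsum_of_norm_bounded hgeom hg
  linarith

section Matrix

variable {l m n 𝕜 : Type*} [Fintype n] [DecidableEq n] [NormedRing 𝕜]

theorem norm_mul_diagonal_mul_apply_le (p q : ℝ≥0∞) [p.HolderConjugate q] (A : Matrix l n 𝕜)
    (η : n → 𝕜) (X : Matrix n m 𝕜) (i : l) (k : m) {c : ℝ} (hc : 0 ≤ c)
    (hX : ∀ v, ‖X v k‖ ≤ c) :
    ‖(A * Matrix.diagonal η * X) i k‖ ≤ lpNorm q (A i) * (c * lpNorm p η) := by
  have : Fact (1 ≤ p) := ⟨ENNReal.HolderConjugate.one_le p q⟩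
  rw [Matrix.mul_apply]
  simp only [Matrix.mul_diagonal, mul_assoc]
  refine (norm_sum_mul_le q p _ _).trans (mul_le_mul_of_nonneg_left ?_ (lpNorm_nonneg _ _))
  refine lpNorm_le_mul_lpNorm p hc fun v => (norm_mul_le _ _).trans ?_
  rw [mul_comm c]
  exact mul_le_mul_of_nonneg_left (hX v) (norm_nonneg _)

theorem norm_mul_diagonal_pow_mul_apply_le (p q : ℝ≥0∞) [p.HolderConjugate q] (G : Matrix n n 𝕜)
    (η : n → 𝕜) (C : Matrix n m 𝕜) (j : ℕ) (v : n) (k : m) :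
    ‖((G * Matrix.diagonal η) ^ j * C) v k‖ ≤
      ((⨆ w, lpNorm q (G w)) * lpNorm p η) ^ j * lpNorm q (fun w => C w k) := by
  have : Fact (1 ≤ q) := ⟨ENNReal.HolderConjugate.one_le q p⟩
  induction j generalizing v with
  | zero => simpa using norm_le_lpNorm q (fun w => C w k) v
  | succ j ih =>
    have hGv : lpNorm q (G v) ≤ ⨆ w, lpNorm q (G w) :=
      le_ciSup (f := fun w => lpNorm q (G w)) (Set.finite_range _).bddAbove v
    have hG : 0 ≤ ⨆ w, lpNorm q (G w) := Real.iSup_nonneg fun w => lpNorm_nonneg _ _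
    rw [pow_succ', Matrix.mul_assoc]
    have hc := mul_nonneg (pow_nonneg (mul_nonneg hG (lpNorm_nonneg p η)) j)
      (lpNorm_nonneg q fun w => C w k)
    refine (norm_mul_diagonal_mul_apply_le p q G η _ v k hc ih).trans ?_
    calc lpNorm q (G v) * (((⨆ w, lpNorm q (G w)) * lpNorm p η) ^ j *
          lpNorm q (fun w => C w k) * lpNorm p η)
        ≤ (⨆ w, lpNorm q (G w)) * (((⨆ w, lpNorm q (G w)) * lpNorm p η) ^ j *
          lpNorm q (fun w => C w k) * lpNorm p η) :=
          mul_le_mul_of_nonneg_right hGv (mul_nonneg hc (lpNorm_nonneg p η))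
      _ = _ := by ring

end Matrix

section Born

variable {α0 : ℝ} {B : Matrix R V ℂ} {G : Matrix V V ℂ} {C : Matrix V S ℂ}

omit [DecidableEq V] in
theorem muConst_nonneg (hα0 : 0 ≤ α0) (q : ℝ≥0∞) : 0 ≤ muConst α0 q G :=
  mul_nonneg hα0 (Real.iSup_nonneg fun _ => lpNorm_nonneg _ _)

omit [DecidableEq V] in
theorem nuConst_nonneg (hα0 : 0 ≤ α0) (p q : ℝ≥0∞) : 0 ≤ nuConst α0 p q B C :=
  mul_nonneg (mul_nonneg hα0 (lpNorm_nonneg _ _)) (lpNorm_nonneg _ _)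

omit [Fintype R] [Fintype S] in
theorem bornK_succ_const (j : ℕ) (η : V → ℂ) :
    (bornK α0 B G C (j + 1) fun _ => η) = fun rs => (-(α0 : ℂ)) ^ (j + 1) *
      (B * Matrix.diagonal η * ((G * Matrix.diagonal η) ^ j * C)) rs.1 rs.2 := by
  simp only [bornK, List.ofFn_const, List.prod_replicate, Matrix.mul_assoc]

omit [Fintype R] [Fintype S] in
theorem bornK_one_smul (c : ℂ) (η : V → ℂ) :
    (bornK α0 B G C 1 fun _ => c • η) = c • bornK α0 B G C 1 fun _ => η := by
  funext rs
  simp only [bornK_succ_const, zero_add, pow_one, pow_zero, Matrix.one_mul,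
    Matrix.diagonal_smul, Matrix.mul_smul, Matrix.smul_mul, Matrix.smul_apply, Pi.smul_apply,
    smul_eq_mul]
  ring

omit [Fintype R] [Fintype S] in
theorem norm_bornK_succ_apply_le (p q : ℝ≥0∞) [p.HolderConjugate q] (hα0 : 0 ≤ α0)
    (η : V → ℂ) (j : ℕ) (r : R) (s : S) :
    ‖bornK α0 B G C (j + 1) (fun _ => η) (r, s)‖ ≤
      α0 ^ (j + 1) * ((⨆ w, lpNorm q (G w)) * lpNorm p η) ^ j * lpNorm p η *
        (lpNorm q (B r) * lpNorm q fun v => C v s) := by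
  have hG : 0 ≤ ⨆ w, lpNorm q (G w) := Real.iSup_nonneg fun w => lpNorm_nonneg _ _
  have hc := mul_nonneg (pow_nonneg (mul_nonneg hG (lpNorm_nonneg p η)) j)
    (lpNorm_nonneg q fun v => C v s)
  rw [bornK_succ_const, norm_mul, norm_pow, norm_neg, Complex.norm_real, Real.norm_of_nonneg hα0]
  refine (mul_le_mul_of_nonneg_left (norm_mul_diagonal_mul_apply_le p q B η _ r s hc
    (norm_mul_diagonal_pow_mul_apply_le p q G η C j · s)) (by positivity)).trans_eq ?_
  ring

theorem lpNorm_bornK_succ_le (p q : ℝ≥0∞) [p.HolderConjugate q] (hα0 : 0 ≤ α0) (η : V → ℂ)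
    (j : ℕ) : lpNorm p (bornK α0 B G C (j + 1) fun _ => η) ≤
      nuConst α0 p q B C * (muConst α0 q G * lpNorm p η) ^ j * lpNorm p η := by
  have : Fact (1 ≤ p) := ⟨ENNReal.HolderConjugate.one_le p q⟩
  set M := α0 ^ (j + 1) * ((⨆ w, lpNorm q (G w)) * lpNorm p η) ^ j * lpNorm p η
  have hM : 0 ≤ M := by
    have := Real.iSup_nonneg fun w => lpNorm_nonneg q (G w)
    have := lpNorm_nonneg p η
    positivity
  calc lpNorm p (bornK α0 B G C (j + 1) fun _ => η)
      ≤ M * lpNorm p (fun x : R × S => lpNorm q (B x.1) * lpNorm q fun v => C v x.2) := by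
        refine lpNorm_le_mul_lpNorm p hM fun x => ?_
        rw [Real.norm_of_nonneg (mul_nonneg (lpNorm_nonneg _ _) (lpNorm_nonneg _ _))]
        exact norm_bornK_succ_apply_le p q hα0 η j x.1 x.2
    _ ≤ M * (lpNorm p (fun r => lpNorm q (B r)) * lpNorm p fun s => lpNorm q fun v => C v s) :=
        mul_le_mul_of_nonneg_left
          (lpNorm_mul_le p (fun r => lpNorm q (B r)) fun s => lpNorm q fun v => C v s) hM
    _ = nuConst α0 p q B C * (muConst α0 q G * lpNorm p η) ^ j * lpNorm p η := by
        rw [nuConst, muConst]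
        ring

theorem CpConst_nonneg (p : ℝ≥0∞) : 0 ≤ CpConst p α0 B G C :=
  Real.sInf_nonneg <| by
    rintro _ ⟨η, -, rfl⟩
    exact lpNorm_nonneg _ _

theorem CpConst_mul_lpNorm_le (p : ℝ≥0∞) [Fact (1 ≤ p)] (η : V → ℂ) :
    CpConst p α0 B G C * lpNorm p η ≤ lpNorm p (bornK α0 B G C 1 fun _ => η) := by
  rcases (lpNorm_nonneg p η).eq_or_lt with h0 | hpos
  · rw [← h0, mul_zero]
    exact lpNorm_nonneg _ _
  have hbdd : BddBelow {t : ℝ | ∃ η : V → ℂ, lpNorm p η = 1 ∧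
      t = lpNorm p (bornK α0 B G C 1 fun _ => η)} := ⟨0, by
    rintro _ ⟨η, -, rfl⟩
    exact lpNorm_nonneg _ _⟩
  have hnorm : ‖(Complex.ofReal (lpNorm p η)⁻¹)‖ = (lpNorm p η)⁻¹ := by
    rw [Complex.norm_real, norm_inv, Real.norm_of_nonneg hpos.le]
  have hunit : lpNorm p (Complex.ofReal (lpNorm p η)⁻¹ • η) = 1 := by
    rw [lpNorm_smul, hnorm, inv_mul_cancel₀ hpos.ne']
  have hle := csInf_le hbdd ⟨_, hunit, rfl⟩
  rw [bornK_one_smul, lpNorm_smul, hnorm] at hle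
  rw [mul_comm]
  exact (le_inv_mul_iff₀ hpos).mp hle

end Born

theorem lt_one_and_mul_div_one_sub_lt {c ν r : ℝ} (hc : 0 ≤ c) (hν : 0 ≤ ν) (hr₀ : 0 < r)
    (hr : r < c / (c + ν)) : r < 1 ∧ ν * r / (1 - r) < c := by
  have hcν : 0 < c + ν := by
    by_contra! h
    rw [le_antisymm h (add_nonneg hc hν), div_zero] at hr
    linarith
  rw [lt_div_iff₀ hcν] at hr
  have hr₁ : r < 1 := by nlinarith
  exact ⟨hr₁, (div_lt_iff₀ (sub_pos.mpr hr₁)).mpr (by linarith)⟩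

theorem forward_born_sum_ne_zero_general
    (p q : ℝ≥0∞) (hpq : 1 / p + 1 / q = 1)
    (α0 : ℝ) (hα0 : 0 < α0) (B : Matrix R V ℂ) (G : Matrix V V ℂ) (C : Matrix V S ℂ)
    (η : V → ℂ) (hη0 : 0 < lpNorm p η)
    (hη : lpNorm p η <
      1 / muConst α0 q G * (CpConst p α0 B G C / (CpConst p α0 B G C + nuConst α0 p q B C))) :
    (∑' j : ℕ, bornK α0 B G C (j + 1) fun _ => η) ≠ 0 := by
  have : p.HolderConjugate q := ENNReal.holderConjugate_iff.mpr (by simpa only [one_div] using hpq)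
  have : Fact (1 ≤ p) := ⟨ENNReal.HolderConjugate.one_le p q⟩
  -- `1 / 0 = 0`, so `μ_p = 0` would turn `hη` into `‖η‖_p < 0`.
  have hμ : 0 < muConst α0 q G := by
    refine (muConst_nonneg hα0.le q).lt_of_ne' fun hμ => ?_
    rw [hμ, div_zero, zero_mul] at hη
    linarith
  rw [one_div, inv_mul_eq_div, lt_div_iff₀' hμ] at hη
  obtain ⟨hr₁, hlt⟩ := lt_one_and_mul_div_one_sub_lt (CpConst_nonneg p) (nuConst_nonneg hα0.le p q)
    (mul_pos hμ hη0) hη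
  set r := muConst α0 q G * lpNorm p η
  have key := tsum_ne_zero_of_norm_succ_le_geometric (a := nuConst α0 p q B C * r * lpNorm p η)
    (g := fun j => WithLp.toLp p (bornK α0 B G C (j + 1) fun _ => η)) (mul_pos hμ hη0).le hr₁
    (fun j => by
      rw [← lpNorm_eq_norm_toLp]
      exact (lpNorm_bornK_succ_le p q hα0.le η (j + 1)).trans_eq (by ring))
    (by
      rw [← lpNorm_eq_norm_toLp, mul_div_right_comm]
      exact (mul_lt_mul_of_pos_right hlt hη0).trans_le (CpConst_mul_lpNorm_le p η))
  intro hsum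
  have hmap : ∑' j, WithLp.toLp p (bornK α0 B G C (j + 1) fun _ => η) =
      WithLp.toLp p (∑' j, bornK α0 B G C (j + 1) fun _ => η) :=
    ((PiLp.continuousLinearEquiv p ℂ fun _ : R × S => ℂ).symm.map_tsum).symm
  rw [hmap, hsum] at key
  exact key rfl

theorem forward_born_sum_ne_zero [Nonempty V] [Nonempty R] [Nonempty S]
    (p q : ℝ≥0∞) (hp : 1 ≤ p) (hq : 1 ≤ q) (hpq : 1 / p + 1 / q = 1)
    (α0 : ℝ) (hα0 : 0 < α0) (B : Matrix R V ℂ) (G : Matrix V V ℂ) (C : Matrix V S ℂ)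
    (hcard : Fintype.card V = Fintype.card (R × S))
    (hinv : Function.Bijective fun η : V → ℂ => bornK α0 B G C 1 fun _ => η)
    (η : V → ℂ) (hη0 : 0 < lpNorm p η)
    (hη : lpNorm p η <
      1 / muConst α0 q G * (CpConst p α0 B G C / (CpConst p α0 B G C + nuConst α0 p q B C))) :
    (∑' j : ℕ, bornK α0 B G C (j + 1) fun _ => η) ≠ 0 :=
  forward_born_sum_ne_zero_general p q hpq α0 hα0 B G C η hη0 hη
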